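/- Let k ≥ 3 be an integer. Then sup_{x∈(1/k,1]} ψ((1−x)/(k−1))/ψ(x) = (log k − log(k−1))/log k, and the supremum is attained at x = 1. Equivalently, the input-restricted KL contraction coefficient of the k-coloring channel Col_k = PC_{−1/(k−1)} at the uniform input distribution equals (log k − log(k−1))/log k (note that for λ = −1/(k−1) one has λx + (1−λ)/k = (1−x)/(k−1)). -/

import Mathlib

/-!
Put `c = (log k - log (k - 1)) / log k` and `g(x) = c ψ(x) - ψ((1 - x)/(k - 1))`; the claim is
`g ≥ 0` on `[1/k, 1]`, where `g` vanishes at both endpoints. Also `g'(1/k) = 0`, and `g''(x)` has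
the sign of `c (k - 2 + x) - x`, which decreases in `x`. Hence once `g''` is negative it stays
nonpositive; by the mean value theorem the same then holds for `g'` (which starts at `0`), so `g`
first increases and then decreases, and `g ≥ min (g (1/k)) (g 1) = 0`. Since `ψ` increases from
`ψ(1/k) = 0`, it is positive on `(1/k, 1]`, and `g ≥ 0` is the ratio bound.
-/

open scoped BigOperators

/-- `ψ(x) = log k + x log x + (1-x) log((1-x)/(k-1))`. -/
noncomputable def psi (k : ℕ) (x : ℝ) : ℝ :=
  Real.log (k : ℝ) + x * Real.log x + (1 - x) * Real.log ((1 - x) / ((k : ℝ) - 1))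

open Real Set

def NonposAfterNeg (g : ℝ → ℝ) (s : Set ℝ) : Prop :=
  ∀ x ∈ s, ∀ y ∈ s, x ≤ y → g x < 0 → g y ≤ 0

theorem NonposAfterNeg.mono {g : ℝ → ℝ} {s t : Set ℝ} (h : NonposAfterNeg g t)
    (hst : s ⊆ t) : NonposAfterNeg g s :=
  fun x hx y hy hxy hgx => h x (hst hx) y (hst hy) hxy hgx

section Calculus

variable {f f' : ℝ → ℝ} {a b : ℝ}

/-- Two mean value theorems: a negative value `f x < 0 ≤ f a` forces a negative slope of `f`
on `(a, x)`, after which no positive slope on `(x, b)` is possible. -/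
theorem le_of_hasDerivAt_nonposAfterNeg (hf : ContinuousOn f (Icc a b))
    (hf' : ∀ t ∈ Ioo a b, HasDerivAt f (f' t) t) (hsign : NonposAfterNeg f' (Ioo a b))
    (ha : 0 ≤ f a) {x : ℝ} (hx : x ∈ Icc a b) (hfx : f x < 0) : f b ≤ f x := by
  have hax : a < x := lt_of_le_of_ne hx.1 (by rintro rfl; linarith)
  rcases hx.2.eq_or_lt with rfl | hxb
  · rfl
  obtain ⟨u, hu, hf'u⟩ := exists_hasDerivAt_eq_slope f f' hax
    (hf.mono (Icc_subset_Icc_right hx.2)) fun t ht => hf' t ⟨ht.1, ht.2.trans hxb⟩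
  have hu_neg : f' u < 0 := by
    rw [hf'u]; exact div_neg_of_neg_of_pos (by linarith) (by linarith)
  by_contra! hbx
  obtain ⟨v, hv, hf'v⟩ := exists_hasDerivAt_eq_slope f f' hxb
    (hf.mono (Icc_subset_Icc_left hx.1)) fun t ht => hf' t ⟨hax.trans ht.1, ht.2⟩
  have hv_nonpos := hsign u ⟨hu.1, hu.2.trans hxb⟩ v ⟨hax.trans hv.1, hv.2⟩
    (hu.2.trans hv.1).le hu_neg
  rw [hf'v] at hv_nonpos
  linarith [div_pos (sub_pos.2 hbx) (sub_pos.2 hxb)]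

theorem nonneg_of_hasDerivAt_nonposAfterNeg (hf : ContinuousOn f (Icc a b))
    (hf' : ∀ t ∈ Ioo a b, HasDerivAt f (f' t) t) (hsign : NonposAfterNeg f' (Ioo a b))
    (ha : 0 ≤ f a) (hb : 0 ≤ f b) {x : ℝ} (hx : x ∈ Icc a b) : 0 ≤ f x := by
  by_contra! hfx
  linarith [le_of_hasDerivAt_nonposAfterNeg hf hf' hsign ha hx hfx]

theorem NonposAfterNeg.of_hasDerivAt (hf : ContinuousOn f (Ico a b))
    (hf' : ∀ t ∈ Ioo a b, HasDerivAt f (f' t) t) (hsign : NonposAfterNeg f' (Ioo a b))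
    (ha : 0 ≤ f a) : NonposAfterNeg f (Ico a b) := by
  intro x hx y hy hxy hfx
  have hsub : Icc a y ⊆ Ico a b := Icc_subset_Ico_right hy.2
  have := le_of_hasDerivAt_nonposAfterNeg (hf.mono hsub)
    (fun t ht => hf' t ⟨ht.1, ht.2.trans hy.2⟩)
    (hsign.mono (Ioo_subset_Ioo_right hy.2.le)) ha ⟨hx.1, hxy⟩ hfx
  linarith

end Calculus

section Psi

variable {k : ℕ}

theorem cast_sub_one_pos (hk : 2 ≤ k) : (0 : ℝ) < k - 1 := by
  have : (2 : ℝ) ≤ k := by exact_mod_cast hk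
  linarith

/-- The first coordinate `λ x + (1 - λ) / k` of the output of the coloring channel,
`λ = -1/(k - 1)`. -/
noncomputable def colorMap (k : ℕ) (x : ℝ) : ℝ :=
  (1 - x) / ((k : ℝ) - 1)

theorem continuous_colorMap (k : ℕ) : Continuous (colorMap k) := by
  unfold colorMap
  fun_prop

theorem psi_def (k : ℕ) (x : ℝ) :
    psi k x = log k + x * log x + (1 - x) * log (colorMap k x) := rfl

noncomputable def psiDeriv (k : ℕ) (x : ℝ) : ℝ :=
  log x - log (colorMap k x)

theorem psi_one (k : ℕ) : psi k 1 = log k := by simp [psi]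

theorem psi_zero (k : ℕ) : psi k 0 = log k - log ((k : ℝ) - 1) := by
  simp [psi, log_inv, sub_eq_add_neg]

theorem colorMap_one_div (hk : 2 ≤ k) : colorMap k (1 / k) = 1 / k := by
  have := (cast_sub_one_pos hk).ne'
  rw [colorMap]
  field_simp

theorem psi_one_div (hk : 2 ≤ k) : psi k (1 / k) = 0 := by
  rw [psi_def, colorMap_one_div hk]
  ring_nf
  simp [log_inv]

theorem psi_eq_mul_log (hk : 2 ≤ k) (x : ℝ) :
    psi k x = log k + x * log x
      + ((k : ℝ) - 1) * (colorMap k x * log (colorMap k x)) := by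
  rw [psi_def, colorMap, ← mul_assoc, mul_div_cancel₀ _ (cast_sub_one_pos hk).ne']

theorem continuous_psi (hk : 2 ≤ k) : Continuous (psi k) := by
  rw [funext (psi_eq_mul_log hk)]
  have := continuous_colorMap k
  fun_prop

theorem hasDerivAt_colorMap (k : ℕ) (x : ℝ) :
    HasDerivAt (colorMap k) (-1 / ((k : ℝ) - 1)) x :=
  ((hasDerivAt_id x).const_sub 1).div_const _

theorem hasDerivAt_psi (hk : 2 ≤ k) {x : ℝ} (hx0 : x ≠ 0) (hx1 : x ≠ 1) :
    HasDerivAt (psi k) (psiDeriv k x) x := by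
  have hk1 := (cast_sub_one_pos hk).ne'
  have hq : colorMap k x ≠ 0 := div_ne_zero (sub_ne_zero.2 (Ne.symm hx1)) hk1
  rw [funext (psi_eq_mul_log hk)]
  refine (((hasDerivAt_mul_log hx0).const_add (log k)).add
    (((hasDerivAt_mul_log hq).comp x (hasDerivAt_colorMap k x)).const_mul ((k : ℝ) - 1)))
    |>.congr_deriv ?_
  rw [psiDeriv, colorMap]
  field_simp
  ring

theorem hasDerivAt_psiDeriv (hk : 2 ≤ k) {x : ℝ} (hx0 : x ≠ 0) (hx1 : x ≠ 1) :
    HasDerivAt (psiDeriv k) (x⁻¹ + (1 - x)⁻¹) x := by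
  have hk1 := (cast_sub_one_pos hk).ne'
  have hq : colorMap k x ≠ 0 := div_ne_zero (sub_ne_zero.2 (Ne.symm hx1)) hk1
  refine (hasDerivAt_log hx0).sub ((hasDerivAt_log hq).comp x (hasDerivAt_colorMap k x))
    |>.congr_deriv ?_
  have : (1 : ℝ) - x ≠ 0 := sub_ne_zero.2 (Ne.symm hx1)
  rw [colorMap]
  field_simp
  ring

theorem colorMap_lt_self (hk : 2 ≤ k) {x : ℝ} (hx : 1 / k < x) :
    colorMap k x < x := by
  have hk0 : (0 : ℝ) < k := by linarith [cast_sub_one_pos hk]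
  rw [colorMap, div_lt_iff₀ (cast_sub_one_pos hk)]
  rw [div_lt_iff₀ hk0] at hx
  linarith

theorem colorMap_pos (hk : 2 ≤ k) {x : ℝ} (hx : x < 1) : 0 < colorMap k x :=
  div_pos (sub_pos.2 hx) (cast_sub_one_pos hk)

theorem psiDeriv_pos (hk : 2 ≤ k) {x : ℝ} (hx : 1 / k < x) (hx1 : x < 1) : 0 < psiDeriv k x :=
  sub_pos.2 (log_lt_log (colorMap_pos hk hx1) (colorMap_lt_self hk hx))

theorem one_div_cast_mem_Ioo (hk : 2 ≤ k) : 1 / (k : ℝ) ∈ Ioo 0 1 := by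
  have hk1 : (1 : ℝ) < k := by linarith [cast_sub_one_pos hk]
  exact ⟨one_div_pos.2 (by linarith), (div_lt_one (by linarith)).2 hk1⟩

theorem colorMap_mem_Ioo (hk : 2 ≤ k) {x : ℝ} (hx : x ∈ Ioo 0 1) :
    colorMap k x ∈ Ioo 0 1 := by
  have hk2 : (2 : ℝ) ≤ k := by exact_mod_cast hk
  refine ⟨colorMap_pos hk hx.2, (div_lt_one (cast_sub_one_pos hk)).2 ?_⟩
  linarith [hx.1]

theorem psiDeriv_one_div (hk : 2 ≤ k) : psiDeriv k (1 / k) = 0 := by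
  rw [psiDeriv, colorMap_one_div hk, sub_self]

theorem psi_pos (hk : 2 ≤ k) {x : ℝ} (hx : 1 / k < x) (hx1 : x ≤ 1) : 0 < psi k x := by
  have hk0 := (one_div_cast_mem_Ioo hk).1
  have hmono : StrictMonoOn (psi k) (Icc (1 / k) 1) := by
    refine strictMonoOn_of_deriv_pos (convex_Icc _ _) (continuous_psi hk).continuousOn ?_
    intro t ht
    rw [interior_Icc] at ht
    obtain ⟨ht, ht1⟩ := ht
    rw [(hasDerivAt_psi hk (hk0.trans ht).ne' ht1.ne).deriv]
    exact psiDeriv_pos hk ht ht1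
  have := hmono ⟨le_rfl, hx.le.trans hx1⟩ ⟨hx.le, hx1⟩ hx
  rwa [psi_one_div hk] at this

end Psi

section Gap

variable {k : ℕ} {c : ℝ}

noncomputable def gap (k : ℕ) (c x : ℝ) : ℝ :=
  c * psi k x - psi k (colorMap k x)

noncomputable def gapDeriv (k : ℕ) (c x : ℝ) : ℝ :=
  c * psiDeriv k x + psiDeriv k (colorMap k x) / ((k : ℝ) - 1)

theorem gap_one_div (hk : 2 ≤ k) : gap k c (1 / k) = 0 := by
  rw [gap, colorMap_one_div hk, psi_one_div hk, mul_zero, sub_zero]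

theorem gapDeriv_one_div (hk : 2 ≤ k) : gapDeriv k c (1 / k) = 0 := by
  rw [gapDeriv, colorMap_one_div hk, psiDeriv_one_div hk, mul_zero, zero_div, add_zero]

theorem continuous_gap (hk : 2 ≤ k) : Continuous (gap k c) :=
  (continuous_const.mul (continuous_psi hk)).sub ((continuous_psi hk).comp (continuous_colorMap k))

theorem hasDerivAt_gap (hk : 2 ≤ k) {x : ℝ} (hx : x ∈ Ioo 0 1) :
    HasDerivAt (gap k c) (gapDeriv k c x) x := by
  have hq := colorMap_mem_Ioo hk hx
  refine ((hasDerivAt_psi hk hx.1.ne' hx.2.ne).const_mul c).sub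
    ((hasDerivAt_psi hk hq.1.ne' hq.2.ne).comp x (hasDerivAt_colorMap k x)) |>.congr_deriv ?_
  rw [gapDeriv]
  ring

theorem hasDerivAt_gapDeriv (hk : 2 ≤ k) {x : ℝ} (hx : x ∈ Ioo 0 1) :
    HasDerivAt (gapDeriv k c) ((c * (k - 2 + x) - x) / (x * (1 - x) * (k - 2 + x))) x := by
  have hq := colorMap_mem_Ioo hk hx
  refine ((hasDerivAt_psiDeriv hk hx.1.ne' hx.2.ne).const_mul c).add
    (((hasDerivAt_psiDeriv hk hq.1.ne' hq.2.ne).comp x (hasDerivAt_colorMap k x)).div_const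
      ((k : ℝ) - 1)) |>.congr_deriv ?_
  have hk1 := (cast_sub_one_pos hk).ne'
  have hk2 : (k : ℝ) - 2 + x ≠ 0 := by
    have : (2 : ℝ) ≤ k := by exact_mod_cast hk
    linarith [hx.1]
  have hx0 := hx.1.ne'
  have h1x : 1 - x ≠ 0 := by linarith [hx.2]
  have h1q : 1 - colorMap k x = (k - 2 + x) / (k - 1) := by
    rw [colorMap]
    field_simp
    ring
  rw [h1q, colorMap]
  field_simp
  ring

/-- The numerator `c (k - 2 + x) - x` is nonincreasing in `x` when `c ≤ 1`, and the denominator is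
positive on `(0, 1)`. -/
theorem nonposAfterNeg_deriv_gapDeriv (hk : 2 ≤ k) (hc : c ≤ 1) :
    NonposAfterNeg (fun x => (c * (k - 2 + x) - x) / (x * (1 - x) * (k - 2 + x))) (Ioo 0 1) := by
  have hk2 : (2 : ℝ) ≤ k := by exact_mod_cast hk
  have hden : ∀ x ∈ Ioo (0 : ℝ) 1, 0 < x * (1 - x) * (k - 2 + x) := fun x hx =>
    mul_pos (mul_pos hx.1 (sub_pos.2 hx.2)) (by linarith [hx.1])
  intro x hx y hy hxy hneg
  have hnum : c * (k - 2 + x) - x < 0 := by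
    by_contra! h
    exact (div_nonneg h (hden x hx).le).not_gt hneg
  refine div_nonpos_of_nonpos_of_nonneg ?_ (hden y hy).le
  nlinarith

theorem gapDeriv_nonposAfterNeg (hk : 2 ≤ k) (hc : c ≤ 1) :
    NonposAfterNeg (gapDeriv k c) (Ioo (1 / k) 1) := by
  have hk0 := (one_div_cast_mem_Ioo hk).1
  have hsub : Ico (1 / (k : ℝ)) 1 ⊆ Ioo 0 1 := fun x hx => ⟨hk0.trans_le hx.1, hx.2⟩
  refine (NonposAfterNeg.of_hasDerivAt ?_
    (fun x hx => hasDerivAt_gapDeriv hk (hsub (Ioo_subset_Ico_self hx)))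
    ((nonposAfterNeg_deriv_gapDeriv hk hc).mono (hsub.trans' Ioo_subset_Ico_self))
    (gapDeriv_one_div hk).ge).mono Ioo_subset_Ico_self
  exact fun x hx => (hasDerivAt_gapDeriv hk (hsub hx)).continuousAt.continuousWithinAt

theorem psi_colorMap_le_mul_psi (hk : 2 ≤ k) (hc : c ≤ 1) (h1 : psi k 0 ≤ c * psi k 1)
    {x : ℝ} (hx : x ∈ Icc (1 / (k : ℝ)) 1) : psi k (colorMap k x) ≤ c * psi k x := by
  have hk0 := (one_div_cast_mem_Ioo hk).1
  have hgap1 : 0 ≤ gap k c 1 := by simpa [gap, colorMap] using h1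
  have := nonneg_of_hasDerivAt_nonposAfterNeg (continuous_gap hk).continuousOn
    (fun t ht => hasDerivAt_gap hk ⟨hk0.trans ht.1, ht.2⟩) (gapDeriv_nonposAfterNeg hk hc)
    (gap_one_div hk).ge hgap1 hx
  rw [gap] at this
  linarith

end Gap

/-- The input-restricted KL contraction coefficient of the `k`-coloring channel
`Col_k = PC_{−1/(k−1)}` at the uniform input equals `(log k − log(k−1))/log k`:
the function `x ↦ ψ((1−x)/(k−1))/ψ(x)` on `(1/k,1]` has greatest value
`(log k − log(k−1))/log k`, attained at `x = 1`. -/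
theorem coloring_eta_KL (k : ℕ) (hk : 3 ≤ k) :
    IsGreatest {r : ℝ | ∃ x ∈ Set.Ioc (1 / (k : ℝ)) 1,
        r = psi k ((1 - x) / ((k : ℝ) - 1)) / psi k x}
      ((Real.log (k : ℝ) - Real.log ((k : ℝ) - 1)) / Real.log (k : ℝ)) ∧
    psi k ((1 - 1) / ((k : ℝ) - 1)) / psi k 1
      = (Real.log (k : ℝ) - Real.log ((k : ℝ) - 1)) / Real.log (k : ℝ) := by
  have hk2 : 2 ≤ k := by omega
  have hk3 : (3 : ℝ) ≤ k := by exact_mod_cast hk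
  have hlog : 0 < log k := log_pos (by linarith)
  have hval : psi k ((1 - 1) / ((k : ℝ) - 1)) / psi k 1 = (log k - log (k - 1)) / log k := by
    rw [sub_self, zero_div, psi_zero, psi_one]
  refine ⟨⟨⟨1, ⟨(one_div_cast_mem_Ioo hk2).2, le_rfl⟩, hval.symm⟩, ?_⟩, hval⟩
  rintro r ⟨x, hx, rfl⟩
  have hc : (log k - log (k - 1)) / log k ≤ 1 :=
    (div_le_one hlog).2 (sub_le_self _ (log_nonneg (by linarith)))
  have h1 : psi k 0 ≤ (log k - log (k - 1)) / log k * psi k 1 := by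
    rw [psi_zero, psi_one, div_mul_cancel₀ _ hlog.ne']
  rw [div_le_iff₀ (psi_pos hk2 hx.1 hx.2)]
  exact psi_colorMap_le_mul_psi hk2 hc h1 (Ioc_subset_Icc_self hx)
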